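/- Let t_1, t_2, g, u, v be real with u ≠ 0, v ≠ 0 and |u| ≠ |v|, and let H(β) = [[t_1 + i(g + t_2), u + v β^{−1}], [u + v β, t_1 − i(g + t_2)]] for β ∈ ℂ∖{0}. Set E = t_1 + i(g + t_2). Let r be real with min(|v/u|, |u/v|) < r < max(|v/u|, |u/v|), and define the 2×2 complex matrix M by M_{ab} = (1/(2πi)) ∮_{|β|=r} [ (H(β) − E·I_2)^{−1} ]_{ab} · dβ/β, the contour being the counterclockwise circle of radius r centered at the origin. Then det M = 0 if and only if |u| < |v|. Hence E = t_1 ± i(g + t_2) are isolated edge modes exactly when |u| < |v|. -/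

import Mathlib

open Real Complex Matrix

/-!
On the circle `|β| = r`, `H(β) - E = !![0, u + v β⁻¹; u + v β, -2i(g + t₂)]`, whose inverse has
`(1,1)`-entry `0` and off-diagonal entries `(u + v β)⁻¹` and `(u + v β⁻¹)⁻¹`. Hence
`det M = -M₀₁ M₁₀`, and after partial fractions `M₀₁ = u⁻¹ (1 - [|u/v| < r])` and
`M₁₀ = u⁻¹ [|v/u| < r]`, the brackets being winding numbers of the circle around `-u/v` and
`-v/u`. Exactly one of `|u/v|`, `|v/u|` lies below `r`, and it is `|u/v|` iff `|u| < |v|`.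
-/

section Window

variable {a b r : ℝ}

theorem lt_iff_lt_of_min_lt_of_lt_max (h₁ : min a b < r) (h₂ : r < max a b) : a < r ↔ a < b := by
  rcases lt_or_ge a b with hab | hab
  · simpa [hab] using (min_eq_left hab.le) ▸ h₁
  · simpa [hab.not_gt] using ((max_eq_left hab) ▸ h₂).le

theorem lt_iff_not_lt_of_min_lt_of_lt_max (h₁ : min a b < r) (h₂ : r < max a b) :
    a < r ↔ ¬b < r := by
  have hb : b < r ↔ b < a :=
    lt_iff_lt_of_min_lt_of_lt_max (by rwa [min_comm]) (by rwa [max_comm])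
  rw [lt_iff_lt_of_min_lt_of_lt_max h₁ h₂, hb, not_lt]
  exact ⟨le_of_lt, fun h => h.lt_of_ne (min_lt_max.1 (h₁.trans h₂))⟩

theorem ne_left_of_min_lt_of_lt_max (h₁ : min a b < r) (h₂ : r < max a b) : r ≠ a := by
  rintro rfl
  simp only [min_lt_iff, lt_self_iff_false, false_or, lt_max_iff] at h₁ h₂
  exact h₁.asymm h₂

end Window

theorem ne_zero_of_min_abs_div_lt_max {u v : ℝ}
    (h : min |v / u| |u / v| < max |v / u| |u / v|) : u ≠ 0 ∧ v ≠ 0 := by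
  constructor <;> rintro rfl <;> simp at h

theorem abs_div_lt_abs_div_iff {u v : ℝ} (hu : u ≠ 0) (hv : v ≠ 0) :
    |u / v| < |v / u| ↔ |u| < |v| := by
  rw [abs_div, abs_div, div_lt_div_iff₀ (abs_pos.2 hv) (abs_pos.2 hu)]
  exact (mul_self_lt_mul_self_iff (abs_nonneg u) (abs_nonneg v)).symm

section Winding

open Metric

theorem circleIntegral.integral_sub_inv_of_notMem_closedBall {c w : ℂ} {R : ℝ} (hR : 0 ≤ R)
    (hw : w ∉ closedBall c R) : (∮ z in C(c, R), (z - w)⁻¹) = 0 := by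
  refine DiffContOnCl.circleIntegral_eq_zero hR (DifferentiableOn.diffContOnCl_ball ?_ subset_rfl)
  exact (differentiableOn_id.sub_const w).inv fun z hz => sub_ne_zero.2 (ne_of_mem_of_not_mem hz hw)

theorem two_pi_I_inv_mul_circleIntegral_sub_inv {c w : ℂ} {R : ℝ} (hR : 0 ≤ R)
    (hw : dist w c ≠ R) :
    (2 * π * I)⁻¹ * (∮ z in C(c, R), (z - w)⁻¹) = if dist w c < R then 1 else 0 := by
  split_ifs with h
  · rw [circleIntegral.integral_sub_inv_of_mem_ball h, inv_mul_cancel₀ two_pi_I_ne_zero]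
  · rw [circleIntegral.integral_sub_inv_of_notMem_closedBall hR, mul_zero]
    simpa [mem_closedBall] using lt_of_le_of_ne (not_lt.1 h) hw.symm

end Winding

theorem Matrix.inv_fin_two_of_zero {K : Type*} [Field K] {b c : K} (d : K) (hb : b ≠ 0)
    (hc : c ≠ 0) : (!![0, b; c, d])⁻¹ = !![-d / (b * c), c⁻¹; b⁻¹, 0] := by
  rw [Matrix.inv_def, Matrix.adjugate_fin_two_of, Matrix.det_fin_two_of]
  ext i j
  fin_cases i <;> fin_cases j <;> simp <;> field_simp

theorem Matrix.inv_fin_two_of_zero_apply_one_one {K : Type*} [Field K] (b c d : K) :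
    (!![0, b; c, d])⁻¹ 1 1 = 0 := by
  simp [Matrix.inv_def, Matrix.adjugate_fin_two_of]

theorem inv_add_mul_mul_inv {K : Type*} [Field K] {u v β : K} (hu : u ≠ 0) (hv : v ≠ 0)
    (hβ : β ≠ 0) (h : u + v * β ≠ 0) :
    (u + v * β)⁻¹ * β⁻¹ = u⁻¹ * ((β - 0)⁻¹ - (β - -(u / v))⁻¹) := by
  have e : β - -(u / v) = (u + v * β) / v := by field_simp; ring
  rw [sub_zero, e, inv_div]
  field_simp
  ring

theorem inv_add_mul_inv_mul_inv {K : Type*} [Field K] {u v β : K} (hu : u ≠ 0) (hβ : β ≠ 0) :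
    (u + v * β⁻¹)⁻¹ * β⁻¹ = u⁻¹ * (β - -(v / u))⁻¹ := by
  have e₁ : u + v * β⁻¹ = (u * β + v) / β := by field_simp
  have e₂ : β - -(v / u) = (u * β + v) / u := by field_simp; ring
  rw [e₁, e₂, inv_div, inv_div]
  field_simp

theorem norm_neg_ofReal_div (u v : ℝ) : ‖-((u : ℂ) / v)‖ = |u / v| := by
  rw [norm_neg, ← ofReal_div, norm_real, Real.norm_eq_abs]

theorem ofReal_add_ofReal_mul_ne_zero {u v : ℝ} {β : ℂ} (hv : v ≠ 0) (hβ : ‖β‖ ≠ |u / v|) :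
    (u : ℂ) + v * β ≠ 0 := by
  intro h
  have hv' : (v : ℂ) ≠ 0 := ofReal_ne_zero.2 hv
  refine hβ (congrArg norm (?_ : β = -((u : ℂ) / v)) |>.trans (norm_neg_ofReal_div u v))
  field_simp
  linear_combination h

theorem ofReal_add_ofReal_mul_inv_ne_zero {u v : ℝ} {β : ℂ} (hv : v ≠ 0)
    (hβ : ‖β‖ ≠ |v / u|) : (u : ℂ) + v * β⁻¹ ≠ 0 :=
  ofReal_add_ofReal_mul_ne_zero hv <| by
    rwa [norm_inv, ne_eq, inv_eq_iff_eq_inv, ← abs_inv, inv_div]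

section EdgeIntegrals

open Metric Set

variable {u v r : ℝ} (d : ℂ)

theorem circleIntegral_inv_apply_zero_one (hu : u ≠ 0) (hv : v ≠ 0) (hr : 0 < r)
    (hru : r ≠ |u / v|) (hrv : r ≠ |v / u|) :
    (2 * π * I)⁻¹ *
        (∮ β in C(0, r), (!![0, (u : ℂ) + v * β⁻¹; (u : ℂ) + v * β, d])⁻¹ 0 1 * β⁻¹) =
      (u : ℂ)⁻¹ * (1 - if |u / v| < r then 1 else 0) := by
  have hw : dist (-((u : ℂ) / v)) 0 ≠ r := by
    rw [dist_zero_right, norm_neg_ofReal_div]; exact hru.symm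
  have h0 : dist (0 : ℂ) 0 ≠ r := by rw [dist_self]; exact hr.ne
  have hEq : EqOn (fun β => (!![0, (u : ℂ) + v * β⁻¹; (u : ℂ) + v * β, d])⁻¹ 0 1 * β⁻¹)
      (fun β => (u : ℂ)⁻¹ * ((β - 0)⁻¹ - (β - -((u : ℂ) / v))⁻¹)) (sphere 0 r) := by
    intro β hβ
    rw [mem_sphere_zero_iff_norm] at hβ
    have hc := ofReal_add_ofReal_mul_ne_zero hv (hβ ▸ hru)
    dsimp only
    rw [Matrix.inv_fin_two_of_zero d (ofReal_add_ofReal_mul_inv_ne_zero hv (hβ ▸ hrv)) hc]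
    exact inv_add_mul_mul_inv (ofReal_ne_zero.2 hu) (ofReal_ne_zero.2 hv)
      (norm_pos_iff.1 (hβ ▸ hr)) hc
  rw [circleIntegral.integral_congr hr.le hEq, circleIntegral.integral_const_mul,
    circleIntegral.integral_sub
      (circleIntegrable_sub_inv_iff.2 (.inr (by rwa [abs_of_pos hr, mem_sphere])))
      (circleIntegrable_sub_inv_iff.2 (.inr (by rwa [abs_of_pos hr, mem_sphere]))),
    mul_left_comm, mul_sub, two_pi_I_inv_mul_circleIntegral_sub_inv hr.le h0,
    two_pi_I_inv_mul_circleIntegral_sub_inv hr.le hw, dist_self, dist_zero_right,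
    norm_neg_ofReal_div, if_pos hr]

theorem circleIntegral_inv_apply_one_zero (hu : u ≠ 0) (hv : v ≠ 0) (hr : 0 < r)
    (hru : r ≠ |u / v|) (hrv : r ≠ |v / u|) :
    (2 * π * I)⁻¹ *
        (∮ β in C(0, r), (!![0, (u : ℂ) + v * β⁻¹; (u : ℂ) + v * β, d])⁻¹ 1 0 * β⁻¹) =
      (u : ℂ)⁻¹ * if |v / u| < r then 1 else 0 := by
  have hw : dist (-((v : ℂ) / u)) 0 ≠ r := by
    rw [dist_zero_right, norm_neg_ofReal_div]; exact hrv.symm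
  have hEq : EqOn (fun β => (!![0, (u : ℂ) + v * β⁻¹; (u : ℂ) + v * β, d])⁻¹ 1 0 * β⁻¹)
      (fun β => (u : ℂ)⁻¹ * (β - -((v : ℂ) / u))⁻¹) (sphere 0 r) := by
    intro β hβ
    rw [mem_sphere_zero_iff_norm] at hβ
    dsimp only
    rw [Matrix.inv_fin_two_of_zero d (ofReal_add_ofReal_mul_inv_ne_zero hv (hβ ▸ hrv))
      (ofReal_add_ofReal_mul_ne_zero hv (hβ ▸ hru))]
    exact inv_add_mul_inv_mul_inv (ofReal_ne_zero.2 hu) (norm_pos_iff.1 (hβ ▸ hr))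
  rw [circleIntegral.integral_congr hr.le hEq, circleIntegral.integral_const_mul, mul_left_comm,
    two_pi_I_inv_mul_circleIntegral_sub_inv hr.le hw, dist_zero_right, norm_neg_ofReal_div]

theorem circleIntegral_inv_apply_one_one :
    (∮ β in C(0, r), (!![0, (u : ℂ) + v * β⁻¹; (u : ℂ) + v * β, d])⁻¹ 1 1 * β⁻¹) = 0 := by
  simp [Matrix.inv_fin_two_of_zero_apply_one_one, circleIntegral]

end EdgeIntegrals

/-- The Bloch matrix of the chiral-symmetry-broken two-band model:
`H(β) = [[t₁ + i(g + t₂), u + v β⁻¹], [u + v β, t₁ − i(g + t₂)]]`. -/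
noncomputable def twoBandModel (t₁ t₂ g u v : ℝ) (β : ℂ) : Matrix (Fin 2) (Fin 2) ℂ :=
  !![(t₁ : ℂ) + Complex.I * ((g : ℂ) + (t₂ : ℂ)), (u : ℂ) + (v : ℂ) * β⁻¹;
     (u : ℂ) + (v : ℂ) * β, (t₁ : ℂ) - Complex.I * ((g : ℂ) + (t₂ : ℂ))]

theorem twoBandModel_sub_smul_one (t₁ t₂ g u v : ℝ) (β : ℂ) :
    twoBandModel t₁ t₂ g u v β -
        ((t₁ : ℂ) + I * ((g : ℂ) + (t₂ : ℂ))) • (1 : Matrix (Fin 2) (Fin 2) ℂ) =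
      !![0, (u : ℂ) + v * β⁻¹; (u : ℂ) + v * β, -(2 * I * ((g : ℂ) + t₂))] := by
  ext i j
  fin_cases i <;> fin_cases j <;> simp [twoBandModel]
  ring

theorem twoBandModel_edge_mode_general (t₁ t₂ g u v : ℝ)
    (E : ℂ) (hE : E = (t₁ : ℂ) + Complex.I * ((g : ℂ) + (t₂ : ℂ)))
    (r : ℝ) (hr₁ : min |v / u| |u / v| < r) (hr₂ : r < max |v / u| |u / v|) :
    (Matrix.of fun a b : Fin 2 =>
        (2 * (π : ℂ) * Complex.I)⁻¹ *
          ∮ β in C(0, r),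
            ((twoBandModel t₁ t₂ g u v β - E • (1 : Matrix (Fin 2) (Fin 2) ℂ))⁻¹ a b) *
              β⁻¹).det = 0 ↔
      |u| < |v| := by
  obtain ⟨hu, hv⟩ := ne_zero_of_min_abs_div_lt_max (hr₁.trans hr₂)
  have hr : 0 < r := (le_min (abs_nonneg _) (abs_nonneg _)).trans_lt hr₁
  have hr₁' : min |u / v| |v / u| < r := by rwa [min_comm]
  have hr₂' : r < max |u / v| |v / u| := by rwa [max_comm]
  have hrv : r ≠ |v / u| := ne_left_of_min_lt_of_lt_max hr₁ hr₂
  have hru : r ≠ |u / v| := ne_left_of_min_lt_of_lt_max hr₁' hr₂'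
  subst hE
  simp only [twoBandModel_sub_smul_one, det_fin_two, of_apply, circleIntegral_inv_apply_one_one,
    mul_zero, zero_sub, neg_eq_zero, circleIntegral_inv_apply_zero_one _ hu hv hr hru hrv,
    circleIntegral_inv_apply_one_zero _ hu hv hr hru hrv,
    lt_iff_not_lt_of_min_lt_of_lt_max hr₁ hr₂]
  rw [← abs_div_lt_abs_div_iff hu hv, ← lt_iff_lt_of_min_lt_of_lt_max hr₁' hr₂']
  by_cases h : |u / v| < r <;> simp [h, hu]

/-- At the candidate edge-mode energy `E = t₁ + i(g + t₂)`, with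
`min(|v/u|, |u/v|) < r < max(|v/u|, |u/v|)`, the edge matrix
`M_{ab} = (1/(2πi)) ∮_{|β|=r} [(H(β) − E)⁻¹]_{ab} dβ/β` satisfies `det M = 0` if and
only if `|u| < |v|`; hence `E = t₁ ± i(g + t₂)` are isolated edge modes exactly when
`|u| < |v|`. -/
theorem twoBandModel_edge_mode (t₁ t₂ g u v : ℝ) (hu : u ≠ 0) (hv : v ≠ 0)
    (huv : |u| ≠ |v|)
    (E : ℂ) (hE : E = (t₁ : ℂ) + Complex.I * ((g : ℂ) + (t₂ : ℂ)))
    (r : ℝ) (hr₁ : min |v / u| |u / v| < r) (hr₂ : r < max |v / u| |u / v|) :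
    (Matrix.of fun a b : Fin 2 =>
        (2 * (π : ℂ) * Complex.I)⁻¹ *
          ∮ β in C(0, r),
            ((twoBandModel t₁ t₂ g u v β - E • (1 : Matrix (Fin 2) (Fin 2) ℂ))⁻¹ a b) *
              β⁻¹).det = 0 ↔
      |u| < |v| :=
  twoBandModel_edge_mode_general t₁ t₂ g u v E hE r hr₁ hr₂
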